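/- arXiv:1810.08957 — 5 statements merged into one kernel-verified Lean document; each statement's English description precedes it below -/
import Mathlib

section
/- Let X and Y be nonempty sets, f : X → ℝ, g : X × Y → ℝ, and A, B ⊆ X nonempty sets such that: (a) sup_{x∈A} f(x) < inf_{x∈B} f(x); (b) sup_{y∈Y} inf_{x∈A} g(x,y) ≤ 0; (c) inf_{x∈B} sup_{y∈Y} g(x,y) ≥ 0; (d) for every x ∈ X \ B, sup_{y∈Y} g(x,y) = +∞. Then sup_{y∈Y} inf_{x∈X} (f(x) + g(x,y)) < inf_{x∈X} sup_{y∈Y} (f(x) + g(x,y)). -/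
/-!
Choose reals `c < d` strictly between `sup_A f` and `inf_B f`. For each `y`, testing the
infimum over `x ∈ A` gives `inf_x (f + g) ≤ c + inf_A g(·, y) ≤ c`. For each `x ∈ B`,
`sup_y (f + g) = f x + sup_y g(x, ·) ≥ d`, and for `x ∉ B` it is `+∞`.
-/

namespace EReal

noncomputable def coeAddOrderIso (r : ℝ) : EReal ≃o EReal where
  toFun x := r + x
  invFun x := x - r
  left_inv x := by simp only [add_comm (r : EReal), add_sub_cancel_right]
  right_inv x := by simp only [add_comm (r : EReal), sub_add_cancel]
  map_rel_iff' {x y} := by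
    simp only [Equiv.coe_fn_mk, add_comm (r : EReal)]
    exact (addLECancellable_coe r).add_le_add_iff_right

theorem coe_add_iSup {ι : Sort*} (r : ℝ) (u : ι → EReal) :
    ⨆ i, ((r : EReal) + u i) = r + ⨆ i, u i :=
  ((coeAddOrderIso r).map_iSup u).symm

theorem coe_add_iInf {ι : Sort*} (r : ℝ) (u : ι → EReal) :
    ⨅ i, ((r : EReal) + u i) = r + ⨅ i, u i :=
  ((coeAddOrderIso r).map_iInf u).symm

end EReal

theorem iSup_iInf_add_le {X Y : Type*} (f : X → ℝ) (g : X × Y → ℝ) (A : Set X) (c : ℝ)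
    (hfA : ⨆ x : A, (f x : EReal) ≤ c) (hgA : ⨆ y : Y, ⨅ x : A, (g (x, y) : EReal) ≤ 0) :
    ⨆ y : Y, ⨅ x : X, ((f x + g (x, y) : ℝ) : EReal) ≤ c := by
  refine iSup_le fun y => ?_
  calc ⨅ x : X, ((f x + g (x, y) : ℝ) : EReal)
      ≤ ⨅ a : A, ((c : EReal) + g (a, y)) := by
        refine le_iInf fun a => iInf_le_of_le a ?_
        rw [EReal.coe_add]
        gcongr
        exact EReal.coe_le_coe_iff.mp ((le_iSup (fun x : A => (f x : EReal)) a).trans hfA)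
    _ = c + ⨅ a : A, (g (a, y) : EReal) := EReal.coe_add_iInf c _
    _ ≤ c + 0 := by
        gcongr
        exact (le_iSup (fun y => ⨅ x : A, (g (x, y) : EReal)) y).trans hgA
    _ = c := add_zero _

theorem le_iInf_iSup_add {X Y : Type*} (f : X → ℝ) (g : X × Y → ℝ) (B : Set X) (c : ℝ)
    (hfB : (c : EReal) ≤ ⨅ x : B, (f x : EReal))
    (hgB : (0 : EReal) ≤ ⨅ x : B, ⨆ y : Y, (g (x, y) : EReal))
    (hg_compl : ∀ x : X, x ∉ B → ⨆ y : Y, (g (x, y) : EReal) = ⊤) :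
    (c : EReal) ≤ ⨅ x : X, ⨆ y : Y, ((f x + g (x, y) : ℝ) : EReal) := by
  refine le_iInf fun x => ?_
  simp only [EReal.coe_add, EReal.coe_add_iSup]
  by_cases hx : x ∈ B
  · calc (c : EReal) = c + 0 := (add_zero _).symm
      _ ≤ f x + ⨆ y : Y, (g (x, y) : EReal) :=
        add_le_add (hfB.trans (iInf_le (fun x : B => (f x : EReal)) ⟨x, hx⟩))
          (hgB.trans (iInf_le (fun x : B => ⨆ y : Y, (g (x, y) : EReal)) ⟨x, hx⟩))
  · rw [hg_compl x hx, EReal.coe_add_top]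
    exact le_top

theorem stmt0_general {X Y : Type*}
    (f : X → ℝ) (g : X × Y → ℝ) (A B : Set X)
    (ha : (⨆ x : A, (f x : EReal)) < ⨅ x : B, (f x : EReal))
    (hb : (⨆ y : Y, ⨅ x : A, (g (x, y) : EReal)) ≤ 0)
    (hc : (0 : EReal) ≤ ⨅ x : B, ⨆ y : Y, (g (x, y) : EReal))
    (hd : ∀ x : X, x ∉ B → (⨆ y : Y, (g (x, y) : EReal)) = ⊤) :
    (⨆ y : Y, ⨅ x : X, ((f x + g (x, y) : ℝ) : EReal)) <
      ⨅ x : X, ⨆ y : Y, ((f x + g (x, y) : ℝ) : EReal) := by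
  obtain ⟨c, hAc, hcB⟩ := EReal.lt_iff_exists_real_btwn.mp ha
  obtain ⟨d, hcd, hdB⟩ := EReal.lt_iff_exists_real_btwn.mp hcB
  calc ⨆ y : Y, ⨅ x : X, ((f x + g (x, y) : ℝ) : EReal)
      ≤ c := iSup_iInf_add_le f g A c hAc.le hb
    _ < d := hcd
    _ ≤ ⨅ x : X, ⨆ y : Y, ((f x + g (x, y) : ℝ) : EReal) := le_iInf_iSup_add f g B d hdB.le hc hd

/-- Proposition 2.2: a criterion for a strict minimax inequality. -/
theorem stmt0 {X Y : Type*} [Nonempty X] [Nonempty Y]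
    (f : X → ℝ) (g : X × Y → ℝ) (A B : Set X) (hA : A.Nonempty) (hB : B.Nonempty)
    (ha : (⨆ x : A, (f x : EReal)) < ⨅ x : B, (f x : EReal))
    (hb : (⨆ y : Y, ⨅ x : A, (g (x, y) : EReal)) ≤ 0)
    (hc : (0 : EReal) ≤ ⨅ x : B, ⨆ y : Y, (g (x, y) : EReal))
    (hd : ∀ x : X, x ∉ B → (⨆ y : Y, (g (x, y) : EReal)) = ⊤) :
    (⨆ y : Y, ⨅ x : X, ((f x + g (x, y) : ℝ) : EReal)) <
      ⨅ x : X, ⨆ y : Y, ((f x + g (x, y) : ℝ) : EReal) :=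
  stmt0_general f g A B ha hb hc hd
end

section
/- Let X, Y be topological spaces, F : X → Set Y a lower semicontinuous multifunction with nonempty values, and A ⊆ X a connected set. Assume the set {x ∈ A : F(x) is connected} is dense in A. Then the image F(A) = ⋃_{x ∈ A} F(x) is connected. -/
/-!
If a separation `u, v` of `⋃ x ∈ A, F x` existed, the lower inverses `{x | (F x ∩ u).Nonempty}`
and `{x | (F x ∩ v).Nonempty}` would be open by lower semicontinuity and would cover `A`, each
meeting it; connectedness of `A` makes them overlap inside `A`, and density then yields a point of
the overlap whose value is connected yet meets both `u` and `v`, a contradiction.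
-/

open Set

theorem isPreconnected_biUnion_of_lowerSemicontinuous {X Y : Type*} [TopologicalSpace X]
    [TopologicalSpace Y] {F : X → Set Y}
    (hlsc : ∀ V : Set Y, IsOpen V → IsOpen {x | (F x ∩ V).Nonempty})
    {A : Set X} (hA : IsPreconnected A) (hne : ∀ x ∈ A, (F x).Nonempty)
    (hdense : A ⊆ closure {x ∈ A | IsPreconnected (F x)}) :
    IsPreconnected (⋃ x ∈ A, F x) := by
  intro u v hu hv hcover ⟨yu, hyu, hyuu⟩ ⟨yv, hyv, hyvv⟩
  have hsub : ∀ x ∈ A, F x ⊆ u ∪ v := fun x hx => (subset_biUnion_of_mem hx).trans hcover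
  have hAcover : A ⊆ {x | (F x ∩ u).Nonempty} ∪ {x | (F x ∩ v).Nonempty} := by
    intro x hx
    obtain ⟨y, hy⟩ := hne x hx
    exact (hsub x hx hy).imp (fun h => ⟨y, hy, h⟩) (fun h => ⟨y, hy, h⟩)
  obtain ⟨xu, hxu, hyu⟩ := mem_iUnion₂.mp hyu
  obtain ⟨xv, hxv, hyv⟩ := mem_iUnion₂.mp hyv
  obtain ⟨x₀, hx₀, hx₀u, hx₀v⟩ := hA _ _ (hlsc u hu) (hlsc v hv) hAcover
    ⟨xu, hxu, yu, hyu, hyuu⟩ ⟨xv, hxv, yv, hyv, hyvv⟩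
  obtain ⟨x₁, ⟨hx₁u, hx₁v⟩, hx₁, hFx₁⟩ :=
    mem_closure_iff.mp (hdense hx₀) _ ((hlsc u hu).inter (hlsc v hv)) ⟨hx₀u, hx₀v⟩
  obtain ⟨y, hy, hyuv⟩ := hFx₁ u v hu hv (hsub x₁ hx₁) hx₁u hx₁v
  exact ⟨y, mem_biUnion hx₁ hy, hyuv⟩

/-- Proposition 2.A: the image of a connected set under a lower semicontinuous
multifunction with nonempty values whose values are connected on a dense subset
is connected. -/
theorem stmt7 {X Y : Type*} [TopologicalSpace X] [TopologicalSpace Y]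
    (F : X → Set Y)
    (hlsc : ∀ V : Set Y, IsOpen V → IsOpen {x | (F x ∩ V).Nonempty})
    (hne : ∀ x, (F x).Nonempty)
    (A : Set X) (hA : IsConnected A)
    (hdense : A ⊆ closure {x ∈ A | IsConnected (F x)}) :
    IsConnected (⋃ x ∈ A, F x) := by
  obtain ⟨a, ha⟩ := hA.nonempty
  refine ⟨nonempty_biUnion.mpr ⟨a, ha, hne a⟩, ?_⟩
  exact isPreconnected_biUnion_of_lowerSemicontinuous hlsc hA.isPreconnected (fun x _ => hne x)
    (hdense.trans (closure_mono fun x hx => ⟨hx.1, hx.2.isPreconnected⟩))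
end

section
/- Let X be a topological space, f : X → ℝ a continuous function that is inf-connected (i.e., f^{-1}((−∞, r)) is connected for every r ∈ ℝ), and let c ∈ ℝ. Then for every continuous surjective open map g : Z → X from a topological space Z such that g^{-1}(x) is connected for each x in a dense subset of X, the set {z ∈ Z : f(g(z)) < c} is connected (whenever nonempty). -/
open Set

/-! Open sets `u`, `v` splitting `g ⁻¹' U` project to open sets `g '' u`, `g '' v` covering `U`,
so they overlap inside `U`. The overlap is open, hence contains a point of the dense set `D`; its
preconnected fiber lies in `g ⁻¹' U` and meets both `u` and `v`, so it meets `u ∩ v`. -/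

theorem IsPreconnected.preimage_of_isOpenMap_of_dense_fibers {X Z : Type*} [TopologicalSpace X]
    [TopologicalSpace Z] {g : Z → X} {U D : Set X} (hU : IsPreconnected U) (hg : IsOpenMap g)
    (hsurj : Function.Surjective g) (hUo : IsOpen U) (hD : Dense D)
    (hfib : ∀ x ∈ D, IsPreconnected (g ⁻¹' {x})) :
    IsPreconnected (g ⁻¹' U) := by
  intro u v hu hv hcov ⟨z, hzU, hzu⟩ ⟨w, hwU, hwv⟩
  have hcovU : U ⊆ g '' u ∪ g '' v := by
    intro x hx
    obtain ⟨z, rfl⟩ := hsurj x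
    exact (hcov hx).imp (mem_image_of_mem g) (mem_image_of_mem g)
  obtain ⟨x, hxU, hxu, hxv⟩ := hU _ _ (hg u hu) (hg v hv) hcovU
    ⟨g z, hzU, mem_image_of_mem g hzu⟩ ⟨g w, hwU, mem_image_of_mem g hwv⟩
  obtain ⟨_, ⟨hyU, ⟨a, hau, rfl⟩, b, hbv, hba⟩, hyD⟩ := hD.inter_open_nonempty
    (U ∩ (g '' u ∩ g '' v)) (hUo.inter ((hg u hu).inter (hg v hv))) ⟨x, hxU, hxu, hxv⟩
  have hfibU : g ⁻¹' {g a} ⊆ g ⁻¹' U := preimage_mono (singleton_subset_iff.2 hyU)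
  obtain ⟨y, hyfib, hyuv⟩ :=
    hfib _ hyD u v hu hv (hfibU.trans hcov) ⟨a, rfl, hau⟩ ⟨b, hba, hbv⟩
  exact ⟨y, hfibU hyfib, hyuv⟩

theorem stmt8_general {X Z : Type*} [TopologicalSpace X] [TopologicalSpace Z]
    (f : X → ℝ) (hf : Continuous f)
    (hinf : ∀ r : ℝ, IsPreconnected (f ⁻¹' Iio r))
    (c : ℝ)
    (g : Z → X) (hgsurj : Function.Surjective g)
    (hgopen : IsOpenMap g)
    (hfib : ∃ D : Set X, Dense D ∧ ∀ x ∈ D, IsConnected (g ⁻¹' {x}))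
    (hne : {z : Z | f (g z) < c}.Nonempty) :
    IsConnected {z : Z | f (g z) < c} := by
  obtain ⟨D, hD, hfibD⟩ := hfib
  exact ⟨hne, (hinf c).preimage_of_isOpenMap_of_dense_fibers hgopen hgsurj
    (isOpen_Iio.preimage hf) hD fun x hx => (hfibD x hx).isPreconnected⟩

/-- Key step in the proof of Theorem 2.1: preimages of strict sublevel sets of a
continuous inf-connected function under a continuous open surjection with
connected fibers over a dense set are connected. -/
theorem stmt8 {X Z : Type*} [TopologicalSpace X] [TopologicalSpace Z]
    (f : X → ℝ) (hf : Continuous f)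
    (hinf : ∀ r : ℝ, IsPreconnected (f ⁻¹' Iio r))
    (c : ℝ)
    (g : Z → X) (hg : Continuous g) (hgsurj : Function.Surjective g)
    (hgopen : IsOpenMap g)
    (hfib : ∃ D : Set X, Dense D ∧ ∀ x ∈ D, IsConnected (g ⁻¹' {x}))
    (hne : {z : Z | f (g z) < c}.Nonempty) :
    IsConnected {z : Z | f (g z) < c} :=
  stmt8_general f hf hinf c g hgsurj hgopen hfib hne
end

section
/- Let X be a nonempty set, E a real vector space, Y ⊆ E a nonempty convex set, and f : X × Y → ℝ such that f(x, ·) is concave on Y for each x ∈ X. Suppose there exist nonempty sets A, B ⊆ X and g : X × Y → ℝ with f(x,y) = h(x) + g(x,y) for some h : X → ℝ, where sup_A h < inf_B h, sup_{y∈Y} inf_{x∈A} g(x,y) ≤ 0, inf_{x∈B} sup_{y∈Y} g(x,y) ≥ 0, and sup_{y∈Y} g(x,y) = +∞ for all x ∉ B. Then sup_{y∈Y} inf_{x∈X} f(x,y) ≤ sup_A h + ε < inf_B h ≤ inf_{x∈X} sup_{y∈Y} f(x,y) for every ε ∈ (0, inf_B h − sup_A h); in particular the strict minimax inequality sup_Y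 inf_X f < inf_X sup_Y f holds. -/
/-!
Write `a := sup_A h` and `b := inf_B h`. For every `y`, testing `inf_X f(·, y)` on `A` gives
`f(x, y) ≤ a + g(x, y)`, and `inf_A g(·, y) ≤ 0`, so `sup_Y inf_X f ≤ a`. For every `x`,
`sup_Y f(x, ·) ≥ h x + sup_Y g(x, ·)`, which is `+∞` off `B` and at least `h x ≥ b` on `B`,
so `inf_X sup_Y f ≥ b`. Since `a < b`, the minimax inequality is strict.
-/

namespace EReal

variable {ι : Type*} {v : ι → EReal}

lemma iInf_add_le_add_iInf {a : EReal} (h₁ : a ≠ ⊥ ∨ ⨅ i, v i ≠ ⊤) (h₂ : a ≠ ⊤ ∨ ⨅ i, v i ≠ ⊥) :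
    ⨅ i, (a + v i) ≤ a + ⨅ i, v i :=
  le_add_of_forall_gt h₁ h₂ fun _ ha _ hb ↦
    let ⟨i, hi⟩ := iInf_lt_iff.mp hb
    iInf_le_of_le i (add_le_add ha.le hi.le)

lemma add_iSup_le_iSup_add (a : EReal) : a + ⨆ i, v i ≤ ⨆ i, (a + v i) :=
  add_le_of_forall_lt fun _ ha _ hb ↦
    let ⟨i, hi⟩ := lt_iSup_iff.mp hb
    le_iSup_of_le i (add_le_add ha.le hi.le)

end EReal

section MinimaxGap

variable {ι κ : Type*} {f g : ι → κ → ℝ} {h : ι → ℝ}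

theorem iSup_iInf_le_iSup_of_eq_add (hfg : ∀ i k, f i k = h i + g i k) {A : Set ι}
    (hA : A.Nonempty) (hA_top : ⨆ i : A, (h i : EReal) ≠ ⊤)
    (hg : ⨆ k, ⨅ i : A, (g i k : EReal) ≤ 0) :
    ⨆ k, ⨅ i, (f i k : EReal) ≤ ⨆ i : A, (h i : EReal) := by
  set a := ⨆ i : A, (h i : EReal)
  have ha_bot : a ≠ ⊥ :=
    ne_bot_of_le_ne_bot (EReal.coe_ne_bot (h hA.some)) (le_iSup_of_le ⟨_, hA.some_mem⟩ le_rfl)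
  refine iSup_le fun k ↦ ?_
  calc ⨅ i, (f i k : EReal)
      ≤ ⨅ i : A, (f i k : EReal) := le_iInf_comp _ _
    _ ≤ ⨅ i : A, (a + g i k) := by
        gcongr with i
        rw [hfg, EReal.coe_add]
        gcongr
        exact le_iSup_of_le i le_rfl
    _ ≤ a + ⨅ i : A, (g i k : EReal) := EReal.iInf_add_le_add_iInf (.inl ha_bot) (.inl hA_top)
    _ ≤ a + 0 := by gcongr; exact (le_iSup (fun k ↦ ⨅ i : A, (g i k : EReal)) k).trans hg
    _ = a := add_zero a

theorem iInf_le_iInf_iSup_of_eq_add (hfg : ∀ i k, f i k = h i + g i k) {B : Set ι}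
    (hg : 0 ≤ ⨅ i : B, ⨆ k, (g i k : EReal))
    (hg_top : ∀ i ∉ B, ⨆ k, (g i k : EReal) = ⊤) :
    ⨅ i : B, (h i : EReal) ≤ ⨅ i, ⨆ k, (f i k : EReal) := by
  refine le_iInf fun i ↦ ?_
  have hf : (h i : EReal) + ⨆ k, (g i k : EReal) ≤ ⨆ k, (f i k : EReal) := by
    simpa only [hfg, EReal.coe_add] using EReal.add_iSup_le_iSup_add (h i : EReal)
  by_cases hi : i ∈ B
  · calc ⨅ j : B, (h j : EReal)
        ≤ h i + 0 := by rw [add_zero]; exact iInf_le_of_le ⟨i, hi⟩ le_rfl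
      _ ≤ h i + ⨆ k, (g i k : EReal) := by
          gcongr
          exact hg.trans (iInf_le (fun j : B ↦ ⨆ k, (g j k : EReal)) ⟨i, hi⟩)
      _ ≤ ⨆ k, (f i k : EReal) := hf
  · rw [hg_top i hi, EReal.add_top_of_ne_bot (EReal.coe_ne_bot _)] at hf
    exact le_top.trans hf

end MinimaxGap

theorem stmt9_general {X E : Type*}
    (Y : Set E)
    (f : X → E → ℝ) (h : X → ℝ) (g : X → E → ℝ)
    (hfg : ∀ x : X, ∀ y ∈ Y, f x y = h x + g x y)
    (A B : Set X) (hA : A.Nonempty)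
    (hab : (⨆ x : A, (h x : EReal)) < ⨅ x : B, (h x : EReal))
    (hb : (⨆ y : Y, ⨅ x : A, (g x y : EReal)) ≤ 0)
    (hc : (0 : EReal) ≤ ⨅ x : B, ⨆ y : Y, (g x y : EReal))
    (hd : ∀ x : X, x ∉ B → (⨆ y : Y, (g x y : EReal)) = ⊤) :
    (∀ ε : ℝ, 0 < ε →
        (ε : EReal) < (⨅ x : B, (h x : EReal)) - ⨆ x : A, (h x : EReal) →
        (⨆ y : Y, ⨅ x : X, (f x y : EReal)) ≤ (⨆ x : A, (h x : EReal)) + (ε : EReal) ∧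
        (⨆ x : A, (h x : EReal)) + (ε : EReal) < (⨅ x : B, (h x : EReal)) ∧
        (⨅ x : B, (h x : EReal)) ≤ ⨅ x : X, ⨆ y : Y, (f x y : EReal)) ∧
      (⨆ y : Y, ⨅ x : X, (f x y : EReal)) < ⨅ x : X, ⨆ y : Y, (f x y : EReal) := by
  have hfg' : ∀ x (y : Y), f x y = h x + g x y := fun x y ↦ hfg x y y.2
  have upper := iSup_iInf_le_iSup_of_eq_add hfg' hA hab.ne_top hb
  have lower := iInf_le_iInf_iSup_of_eq_add hfg' hc hd
  refine ⟨fun ε hε hεab ↦ ⟨?_, ?_, lower⟩, upper.trans_lt (hab.trans_le lower)⟩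
  · exact upper.trans (le_add_of_nonneg_right (EReal.coe_nonneg.mpr hε.le))
  · simpa only [add_comm] using EReal.add_lt_of_lt_sub hεab

/-- Inequalities (2.1) and (2.2) from the proof of Proposition 2.2, and the
resulting strict minimax inequality. -/
theorem stmt9 {X E : Type*} [Nonempty X] [AddCommGroup E] [Module ℝ E]
    (Y : Set E) (hY : Y.Nonempty) (hYconv : Convex ℝ Y)
    (f : X → E → ℝ) (h : X → ℝ) (g : X → E → ℝ)
    (hconc : ∀ x, ConcaveOn ℝ Y (f x))
    (hfg : ∀ x : X, ∀ y ∈ Y, f x y = h x + g x y)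
    (A B : Set X) (hA : A.Nonempty) (hB : B.Nonempty)
    (hab : (⨆ x : A, (h x : EReal)) < ⨅ x : B, (h x : EReal))
    (hb : (⨆ y : Y, ⨅ x : A, (g x y : EReal)) ≤ 0)
    (hc : (0 : EReal) ≤ ⨅ x : B, ⨆ y : Y, (g x y : EReal))
    (hd : ∀ x : X, x ∉ B → (⨆ y : Y, (g x y : EReal)) = ⊤) :
    (∀ ε : ℝ, 0 < ε →
        (ε : EReal) < (⨅ x : B, (h x : EReal)) - ⨆ x : A, (h x : EReal) →
        (⨆ y : Y, ⨅ x : X, (f x y : EReal)) ≤ (⨆ x : A, (h x : EReal)) + (ε : EReal) ∧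
        (⨆ x : A, (h x : EReal)) + (ε : EReal) < (⨅ x : B, (h x : EReal)) ∧
        (⨅ x : B, (h x : EReal)) ≤ ⨅ x : X, ⨆ y : Y, (f x y : EReal)) ∧
      (⨆ y : Y, ⨅ x : X, (f x y : EReal)) < ⨅ x : X, ⨆ y : Y, (f x y : EReal) :=
  stmt9_general Y f h g hfg A B hA hab hb hc hd
end

section
/- Let X be a topological space, I a compact real interval, and f : X × I → ℝ a function that is lower semicontinuous in the first variable, quasi-concave and upper semicontinuous in the second variable, and such that {λ ∈ I : f(·, λ) is inf-connected on X} is dense in I. Then sup_{λ ∈ I} inf_{x ∈ X} f(x, λ) = inf_{x ∈ X} sup_{λ ∈ I} f(x, λ). -/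
/-!
Suppose `r` is a real number strictly between the two sides. For each `x` the superlevel set
`Λ x = {λ ∈ I | r ≤ f x λ}` is a nonempty compact interval, and a point common to all of them
would give `sup_λ inf_x f ≥ r`. In dimension one it suffices that no `Λ x₁` lies entirely to the
left of some `Λ x₂`. If it did, choose `μ` in the gap with `f(·, μ)` inf-connected. Every `x` has
some `λ` with `r < f x λ`, so the sublevel set `{x | f x μ < r}` is covered by the open sets of
points that exceed `r` at some `λ < μ`, respectively at some `λ > μ`. By quasi-concavity no point
of the sublevel set lies in both, so connectedness puts the whole sublevel set on one side, and
`x₁` or `x₂` contradicts this.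
-/

open Set

theorem nonempty_iInter_of_sInf_le_sSup {α ι : Type*} [ConditionallyCompleteLinearOrder α]
    [TopologicalSpace α] [OrderTopology α] [Nonempty ι] {K : ι → Set α}
    (hK : ∀ i, IsCompact (K i)) (hne : ∀ i, (K i).Nonempty) (hoc : ∀ i, (K i).OrdConnected)
    (h : ∀ i j, sInf (K i) ≤ sSup (K j)) : (⋂ i, K i).Nonempty := by
  obtain ⟨j⟩ := ‹Nonempty ι›
  have hbdd : BddAbove (range fun i => sInf (K i)) :=
    ⟨sSup (K j), forall_mem_range.2 fun i => h i j⟩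
  exact ⟨⨆ i, sInf (K i), mem_iInter.2 fun i =>
    (hoc i).out ((hK i).sInf_mem (hne i)) ((hK i).sSup_mem (hne i))
      ⟨le_ciSup hbdd i, ciSup_le fun k => h k i⟩⟩

section Minimax

variable {X : Type*} [TopologicalSpace X] {f : X → ℝ → ℝ} {r : ℝ}

theorem sublevel_subset_or_subset {I : Set ℝ} {μ : ℝ}
    (hlsc : ∀ l ∈ I, LowerSemicontinuous (f · l)) (hqc : ∀ x, QuasiconcaveOn ℝ I (f x))
    (hcov : ∀ x, ∃ l ∈ I, r < f x l) (hμ : IsPreconnected {x | f x μ < r}) :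
    {x | f x μ < r} ⊆ {x | ∃ l ∈ I, l < μ ∧ r < f x l} ∨
      {x | f x μ < r} ⊆ {x | ∃ l ∈ I, μ < l ∧ r < f x l} := by
  have hopen (p : ℝ → Prop) : IsOpen {x | ∃ l ∈ I, p l ∧ r < f x l} :=
    isOpen_iff_forall_mem_open.2 fun _ ⟨l, hl, hp, hr⟩ =>
      ⟨_, fun _ hy => ⟨l, hl, hp, hy⟩, (hlsc l hl).isOpen_preimage r, hr⟩
  refine isPreconnected_iff_subset_of_disjoint.1 hμ _ _ (hopen _) (hopen _) ?_ ?_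
  · intro x hx
    obtain ⟨l, hl, hr⟩ := hcov x
    rcases lt_trichotomy l μ with h | rfl | h
    · exact .inl ⟨l, hl, h, hr⟩
    · exact absurd hx hr.not_gt
    · exact .inr ⟨l, hl, h, hr⟩
  · refine eq_empty_of_forall_notMem ?_
    rintro x ⟨hx, ⟨l₁, hl₁, hlt₁, hr₁⟩, ⟨l₂, hl₂, hlt₂, hr₂⟩⟩
    have hμ_gt : μ ∈ {l ∈ I | r < f x l} :=
      ((hqc x).convex_gt r).ordConnected.out ⟨hl₁, hr₁⟩ ⟨hl₂, hr₂⟩ ⟨hlt₁.le, hlt₂.le⟩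
    exact hx.not_gt hμ_gt.2

variable {a b : ℝ}

theorem sInf_superlevel_le_sSup_superlevel
    (hlsc : ∀ l ∈ Icc a b, LowerSemicontinuous (f · l))
    (hqc : ∀ x, QuasiconcaveOn ℝ (Icc a b) (f x))
    (husc : ∀ x, UpperSemicontinuousOn (f x) (Icc a b))
    (hdense : Icc a b ⊆ closure {l ∈ Icc a b | ∀ r : ℝ, IsPreconnected {x : X | f x l < r}})
    (hcov : ∀ x, ∃ l ∈ Icc a b, r < f x l) (x₁ x₂ : X) :
    sInf {l ∈ Icc a b | r ≤ f x₁ l} ≤ sSup {l ∈ Icc a b | r ≤ f x₂ l} := by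
  set K : X → Set ℝ := fun x => {l ∈ Icc a b | r ≤ f x l}
  have hK (x : X) : IsCompact (K x) := (husc x).isCompact_inter_preimage_Ici isCompact_Icc r
  have hne (x : X) : (K x).Nonempty := let ⟨l, hl, hr⟩ := hcov x; ⟨l, hl, hr.le⟩
  by_contra! hgap
  set c := sSup (K x₂)
  set d := sInf (K x₁)
  have hc : c ∈ K x₂ := (hK x₂).sSup_mem (hne x₂)
  have hd : d ∈ K x₁ := (hK x₁).sInf_mem (hne x₁)
  have hgap_sub : Ioo c d ⊆ Icc a b := Ioo_subset_Icc_self.trans (Icc_subset_Icc hc.1.1 hd.1.2)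
  obtain ⟨μ, ⟨-, hconn⟩, hcμ, hμd⟩ :=
    (closure_inter_open_nonempty_iff isOpen_Ioo).1 <| (nonempty_Ioo.2 hgap).mono fun l hl =>
      ⟨hdense (hgap_sub hl), hl⟩
  have hμI : μ ∈ Icc a b := hgap_sub ⟨hcμ, hμd⟩
  have hbelow {x : X} {l : ℝ} (hl : l ∈ Icc a b) (h : l < sInf (K x)) : f x l < r :=
    not_le.1 fun hr => notMem_of_lt_csInf h (hK x).bddBelow ⟨hl, hr⟩
  have habove {x : X} {l : ℝ} (hl : l ∈ Icc a b) (h : sSup (K x) < l) : f x l < r :=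
    not_le.1 fun hr => notMem_of_csSup_lt h (hK x).bddAbove ⟨hl, hr⟩
  rcases sublevel_subset_or_subset hlsc hqc hcov (hconn r) with hleft | hright
  · obtain ⟨l, hl, hlμ, hr⟩ := hleft (hbelow hμI hμd)
    exact hr.not_gt (hbelow hl (hlμ.trans hμd))
  · obtain ⟨l, hl, hμl, hr⟩ := hright (habove hμI hcμ)
    exact hr.not_gt (habove hl (hcμ.trans hμl))

end Minimax

/-- Theorem 2.A ([10], Theorem 5.7): a topological minimax theorem. -/
theorem stmt13 {X : Type*} [TopologicalSpace X] (a b : ℝ) (hab : a ≤ b)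
    (f : X → ℝ → ℝ)
    (hlsc : ∀ lam ∈ Icc a b, LowerSemicontinuous (fun x => f x lam))
    (hqc : ∀ x, QuasiconcaveOn ℝ (Icc a b) (f x))
    (husc : ∀ x, UpperSemicontinuousOn (f x) (Icc a b))
    (hdense : Icc a b ⊆
        closure {lam ∈ Icc a b | ∀ r : ℝ, IsPreconnected {x : X | f x lam < r}}) :
    (⨆ lam : Icc a b, ⨅ x : X, (f x lam : EReal)) =
      ⨅ x : X, ⨆ lam : Icc a b, (f x lam : EReal) := by
  refine le_antisymm (iSup_iInf_le_iInf_iSup _) (EReal.ge_of_forall_gt_iff_ge.1 fun r hr => ?_)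
  have hcov (x : X) : ∃ l ∈ Icc a b, r < f x l := by
    obtain ⟨l, hl⟩ := lt_iSup_iff.1 (hr.trans_le (iInf_le _ x))
    exact ⟨l, l.2, EReal.coe_lt_coe_iff.1 hl⟩
  obtain ⟨l₀, hl₀, hge⟩ : ∃ l₀ ∈ Icc a b, ∀ x, r ≤ f x l₀ := by
    rcases isEmpty_or_nonempty X with hX | hX
    · exact ⟨a, left_mem_Icc.2 hab, isEmptyElim⟩
    obtain ⟨l₀, hl₀⟩ := nonempty_iInter_of_sInf_le_sSup
      (fun x => (husc x).isCompact_inter_preimage_Ici isCompact_Icc r)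
      (fun x => let ⟨l, hl, hr⟩ := hcov x; ⟨l, hl, hr.le⟩)
      (fun x => ((hqc x) r).ordConnected)
      (sInf_superlevel_le_sSup_superlevel hlsc hqc husc hdense hcov)
    exact ⟨l₀, (mem_iInter.1 hl₀ (Classical.arbitrary X)).1, fun x => (mem_iInter.1 hl₀ x).2⟩
  exact le_iSup_of_le ⟨l₀, hl₀⟩ (le_iInf fun x => EReal.coe_le_coe_iff.2 (hge x))
end
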